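/- For every finite simple graph G and every positive integer k, if the strong k-colour graph S_k(G) is connected, then the k-colour graph C_k(G) is also connected. -/

import Mathlib

/-- A strong `k`-colouring of `G`: a proper colouring using all `k` colours. -/
def IsStrongColoring {V : Type*} {k : ℕ} (G : SimpleGraph V) (α : V → Fin k) : Prop :=
  (∀ ⦃u v⦄, G.Adj u v → α u ≠ α v) ∧ Function.Surjective α

/-- The strong `k`-colour graph `S_k(G)`: vertices are strong `k`-colourings,
two colourings adjacent iff they differ on exactly one vertex. -/
def strongColorGraph {V : Type*} (G : SimpleGraph V) (k : ℕ) :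
    SimpleGraph {α : V → Fin k // IsStrongColoring G α} where
  Adj α β := ∃! v, α.1 v ≠ β.1 v
  symm := by
    constructor
    rintro a b ⟨v, hv, hu⟩
    exact ⟨v, hv.symm, fun w hw => hu w hw.symm⟩
  loopless := by
    constructor
    rintro a ⟨v, hv, -⟩
    exact hv rfl

/-- A proper `k`-colouring of `G`. -/
def IsProperColoring {V : Type*} {k : ℕ} (G : SimpleGraph V) (α : V → Fin k) : Prop :=
  ∀ ⦃u v⦄, G.Adj u v → α u ≠ α v

/-- The `k`-colour graph `C_k(G)`: vertices are proper `k`-colourings,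
two colourings adjacent iff they differ on exactly one vertex. -/
def colorGraph {V : Type*} (G : SimpleGraph V) (k : ℕ) :
    SimpleGraph {α : V → Fin k // IsProperColoring G α} where
  Adj α β := ∃! v, α.1 v ≠ β.1 v
  symm := by
    constructor
    rintro a b ⟨v, hv, hu⟩
    exact ⟨v, hv.symm, fun w hw => hu w hw.symm⟩
  loopless := by
    constructor
    rintro a ⟨v, hv, -⟩
    exact hv rfl

/-
A proper colouring that misses a colour `c` but repeats a colour on two vertices `u ≠ v` can be
recoloured at `u` with `c`: this is one step in `C_k(G)`, keeps the colouring proper, and adds `c`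
to the set of colours used. When `S_k(G)` is nonempty, `G` has at least `k` vertices, so a
colouring that is not surjective does repeat a colour. Hence every proper colouring is joined in
`C_k(G)` to a strong one, and any two strong colourings are joined already in `S_k(G)`.
-/

open Function Set

lemma Function.not_injective_of_not_surjective {α β : Type*} [Finite β] {f g : α → β}
    (hf : Surjective f) (hg : ¬Surjective g) : ¬Injective g := fun hinj =>
  have : Finite α := Finite.of_injective g hinj
  hg (hinj.bijective_of_nat_card_le (Nat.card_le_card_of_surjective f hf)).2

lemma Set.range_update_of_eq {α β : Type*} [DecidableEq α] {f : α → β} {u v : α}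
    (huv : u ≠ v) (h : f u = f v) (c : β) : range (update f u c) = insert c (range f) := by
  ext x
  constructor
  · rintro ⟨w, rfl⟩
    rcases eq_or_ne w u with rfl | hw
    · simp
    · simp [hw]
  · rintro (rfl | ⟨w, rfl⟩)
    · exact ⟨u, by simp⟩
    · rcases eq_or_ne w u with rfl | hw
      · exact ⟨v, by simp [huv.symm, h]⟩
      · exact ⟨w, by simp [hw]⟩

section

variable {V : Type*} {G : SimpleGraph V} {k : ℕ}

variable (G k) in
def strongColorGraphHom : strongColorGraph G k →g colorGraph G k where
  toFun α := ⟨α.1, α.2.1⟩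
  map_rel' h := h

lemma IsProperColoring.update [DecidableEq V] {β : V → Fin k} (hβ : IsProperColoring G β)
    {c : Fin k} (hc : c ∉ range β) (u : V) : IsProperColoring G (update β u c) := by
  intro a b hab
  by_cases ha : a = u <;> by_cases hb : b = u
  · exact absurd (ha.trans hb.symm ▸ hab) G.irrefl
  · rw [ha, update_self, update_of_ne hb]
    exact fun h => hc ⟨b, h.symm⟩
  · rw [hb, update_self, update_of_ne ha]
    exact fun h => hc ⟨a, h⟩
  · rw [update_of_ne ha, update_of_ne hb]
    exact hβ hab

lemma colorGraph_adj_update [DecidableEq V] {β : V → Fin k} (hβ : IsProperColoring G β) {u : V}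
    {c : Fin k} (hc : β u ≠ c) (hβ' : IsProperColoring G (update β u c)) :
    (colorGraph G k).Adj ⟨β, hβ⟩ ⟨update β u c, hβ'⟩ := by
  refine ⟨u, by simpa using hc, fun w hw => ?_⟩
  by_contra hwu
  simp [hwu] at hw

lemma exists_colorGraph_adj_range_ssubset {f : V → Fin k} (hf : Surjective f)
    (β : {β : V → Fin k // IsProperColoring G β}) (hβ : ¬Surjective β.1) :
    ∃ β' : {β : V → Fin k // IsProperColoring G β},
      (colorGraph G k).Adj β β' ∧ range β.1 ⊂ range β'.1 := by
  classical
  obtain ⟨c, hc⟩ : ∃ c, c ∉ range β.1 := by simpa [Surjective] using hβ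
  obtain ⟨u, v, huv, hne⟩ := not_injective_iff.mp (not_injective_of_not_surjective hf hβ)
  refine ⟨⟨update β.1 u c, β.2.update hc u⟩,
    colorGraph_adj_update β.2 (fun h => hc ⟨u, h⟩) _, ?_⟩
  rw [range_update_of_eq hne huv]
  exact ssubset_insert hc

lemma exists_strongColoring_reachable {f : V → Fin k} (hf : Surjective f)
    (β : {β : V → Fin k // IsProperColoring G β}) :
    ∃ α : {α : V → Fin k // IsStrongColoring G α},
      (colorGraph G k).Reachable β (strongColorGraphHom G k α) := by
  induction hn : (range β.1)ᶜ.ncard using Nat.strong_induction_on generalizing β with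
  | _ n ih =>
    by_cases hs : Surjective β.1
    · exact ⟨⟨β.1, β.2, hs⟩, .rfl⟩
    obtain ⟨β', hadj, hlt⟩ := exists_colorGraph_adj_range_ssubset hf β hs
    obtain ⟨α, hα⟩ := ih _ (hn ▸ ncard_lt_ncard (compl_lt_compl_iff_lt.mpr hlt)) β' rfl
    exact ⟨α, hadj.reachable.trans hα⟩

end

theorem colorGraph_connected_of_strongColorGraph_connected_general
    {V : Type*} (G : SimpleGraph V) {k : ℕ}
    (h : (strongColorGraph G k).Connected) :
    (colorGraph G k).Connected := by
  obtain ⟨α₀⟩ := h.nonempty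
  have : Nonempty {α : V → Fin k // IsProperColoring G α} := ⟨strongColorGraphHom G k α₀⟩
  refine ⟨fun β γ => ?_⟩
  obtain ⟨a, ha⟩ := exists_strongColoring_reachable α₀.2.2 β
  obtain ⟨b, hb⟩ := exists_strongColoring_reachable α₀.2.2 γ
  exact ha.trans (((h.preconnected a b).map (strongColorGraphHom G k)).trans hb.symm)

/-- If the strong `k`-colour graph `S_k(G)` is connected, then so is the
`k`-colour graph `C_k(G)`. -/
theorem colorGraph_connected_of_strongColorGraph_connected
    {V : Type*} [Fintype V] (G : SimpleGraph V) {k : ℕ} (hk : 0 < k)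
    (h : (strongColorGraph G k).Connected) :
    (colorGraph G k).Connected :=
  colorGraph_connected_of_strongColorGraph_connected_general G h
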